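/- For weight vectors ω, χ : Fin (n+1) → ℕ with positive coordinates, the composition e(χ/ω) ∘ e(ω/χ) : P(χ) → P(χ) equals the s''-th power map e(s''), where s'' = s(ω,χ)·s(χ,ω). -/

import Mathlib

noncomputable section

/-- The unit sphere in `ℂ^m` (the sphere `S^{2m-1}`). -/
abbrev Sph (m : ℕ) : Type := {z : Fin m → ℂ // ∑ i, ‖z i‖ ^ 2 = 1}

/-- The relation on the sphere whose quotient is the weighted projective space `P(χ)`:
`z ∼ w` iff `w = t ·_χ z` for some unimodular `t`. -/
def wRel (m : ℕ) (χ : Fin m → ℕ) (z w : Sph m) : Prop :=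
  ∃ t : ℂ, ‖t‖ = 1 ∧ ∀ i, (w : Fin m → ℂ) i = t ^ χ i * (z : Fin m → ℂ) i

/-- The weighted projective space `P(χ)`, with the quotient topology. -/
abbrev WP (m : ℕ) (χ : Fin m → ℕ) : Type := Quot (wRel m χ)

/-- The class `[z]_χ` of a point of the sphere in `P(χ)`. -/
def wpMk (m : ℕ) (χ : Fin m → ℕ) (z : Sph m) : WP m χ := Quot.mk _ z

/-- `s(χ,ω)`: the least positive integer `s` with `ω i ∣ s * χ i` for all `i`. -/
def sVal (m : ℕ) (χ ω : Fin m → ℕ) : ℕ := sInf {s : ℕ | 0 < s ∧ ∀ i, ω i ∣ s * χ i}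

/-- The exponents `d i = s(χ,ω)·χ i/ω i` of the map `e(χ/ω)`. -/
def dExp (m : ℕ) (χ ω : Fin m → ℕ) (i : Fin m) : ℕ := sVal m χ ω * χ i / ω i

/-- `IsNorm m χ v w` says that `w` is the normalisation `N_χ(v)`, i.e. `w` lies on the
sphere and has the form `(λ^{χ_0} v_0, …)` for some real `λ > 0`. -/
def IsNorm (m : ℕ) (χ : Fin m → ℕ) (v : Fin m → ℂ) (w : Sph m) : Prop :=
  ∃ l : ℝ, 0 < l ∧ ∀ i, (w : Fin m → ℂ) i = (l : ℂ) ^ χ i * v i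

/-- Coordinatewise powers of a point of the sphere. -/
def powVec (m : ℕ) (d : Fin m → ℕ) (z : Sph m) : Fin m → ℂ :=
  fun i => (z : Fin m → ℂ) i ^ d i

/-- `IsEMap m χ ω e` says that `e` is the canonical map `e(χ/ω) : P(ω) → P(χ)`:
it is continuous and sends `[z]_ω` to `[N_χ(z_0^{d_0}, …, z_n^{d_n})]_χ`. -/
def IsEMap (m : ℕ) (χ ω : Fin m → ℕ) (e : WP m ω → WP m χ) : Prop :=
  Continuous e ∧ ∀ z w : Sph m,
    IsNorm m χ (powVec m (dExp m χ ω) z) w → e (wpMk m ω z) = wpMk m χ w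

/-- `IsPowMap m χ r f` says that `f` is the `r`-th power map `e(r) : P(χ) → P(χ)`:
it is continuous and sends `[z]_χ` to `[N_χ(z_0^r, …, z_n^r)]_χ`. -/
def IsPowMap (m : ℕ) (χ : Fin m → ℕ) (r : ℕ) (f : WP m χ → WP m χ) : Prop :=
  Continuous f ∧ ∀ z w : Sph m,
    IsNorm m χ (fun i => (z : Fin m → ℂ) i ^ r) w → f (wpMk m χ z) = wpMk m χ w

/-! Following `z` through `e(ω/χ)` and then `e(χ/ω)`, the coordinate exponents multiply to
`d(ω/χ)_i · d(χ/ω)_i = s(ω,χ)·s(χ,ω)`, and the two positive normalising scalars merge into a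
single one, so the result is a normalisation of `(z_i ^ s'')`, which is what `e(s'')` gives.
Normalisations exist by the intermediate value theorem. -/

theorem sVal_pos_and_dvd {m : ℕ} (χ : Fin m → ℕ) {ω : Fin m → ℕ} (hω : ∀ i, 0 < ω i) :
    0 < sVal m χ ω ∧ ∀ i, ω i ∣ sVal m χ ω * χ i :=
  Nat.sInf_mem (s := {s | 0 < s ∧ ∀ i, ω i ∣ s * χ i})
    ⟨∏ i, ω i, Finset.prod_pos fun i _ => hω i,
      fun i => dvd_mul_of_dvd_left (Finset.dvd_prod_of_mem _ (Finset.mem_univ i)) _⟩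

theorem mul_dExp {m : ℕ} (χ : Fin m → ℕ) {ω : Fin m → ℕ} (hω : ∀ i, 0 < ω i) (i : Fin m) :
    ω i * dExp m χ ω i = sVal m χ ω * χ i :=
  Nat.mul_div_cancel' ((sVal_pos_and_dvd χ hω).2 i)

theorem dExp_mul_dExp {m : ℕ} {χ ω : Fin m → ℕ} (hχ : ∀ i, 0 < χ i) (hω : ∀ i, 0 < ω i)
    (i : Fin m) : dExp m ω χ i * dExp m χ ω i = sVal m ω χ * sVal m χ ω := by
  have hmul : (sVal m ω χ * ω i) * (sVal m χ ω * χ i)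
      = (sVal m ω χ * sVal m χ ω) * (χ i * ω i) := by ring
  rw [dExp, dExp, Nat.div_mul_div_comm ((sVal_pos_and_dvd ω hχ).2 i)
    ((sVal_pos_and_dvd χ hω).2 i), hmul, Nat.mul_div_cancel _ (Nat.mul_pos (hχ i) (hω i))]

theorem Sph.exists_ne_zero {m : ℕ} (z : Sph m) : ∃ j, (z : Fin m → ℂ) j ≠ 0 := by
  by_contra! h
  simpa [h] using z.2

theorem exists_isNorm {m : ℕ} {χ : Fin m → ℕ} (hχ : ∀ i, 0 < χ i) {v : Fin m → ℂ}
    (hv : v ≠ 0) : ∃ w : Sph m, IsNorm m χ v w := by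
  obtain ⟨j, hj⟩ := Function.ne_iff.mp hv
  set f : ℝ → ℝ := fun l => ∑ i, ‖(l : ℂ) ^ χ i * v i‖ ^ 2
  have hf0 : f 0 = 0 := by simp [f, fun i => (hχ i).ne']
  set M : ℝ := max 1 ‖v j‖⁻¹
  have hM : 1 ≤ M := le_max_left _ _
  have hfM : 1 ≤ f M := by
    have hvj : 0 < ‖v j‖ := norm_pos_iff.mpr hj
    have hj1 : 1 ≤ ‖(M : ℂ) ^ χ j * v j‖ := by
      rw [norm_mul, norm_pow, Complex.norm_real, Real.norm_of_nonneg (by positivity)]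
      calc (1 : ℝ) = ‖v j‖⁻¹ * ‖v j‖ := (inv_mul_cancel₀ hvj.ne').symm
        _ ≤ M ^ χ j * ‖v j‖ := by
          gcongr
          exact (le_max_right _ _).trans (le_self_pow₀ hM (hχ j).ne')
    calc (1 : ℝ) ≤ ‖(M : ℂ) ^ χ j * v j‖ ^ 2 := one_le_pow₀ hj1
      _ ≤ f M := Finset.single_le_sum (f := fun i => ‖(M : ℂ) ^ χ i * v i‖ ^ 2)
          (fun i _ => sq_nonneg _) (Finset.mem_univ j)
  obtain ⟨l, hl, hfl⟩ := intermediate_value_Icc (zero_le_one.trans hM)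
    (by fun_prop : Continuous f).continuousOn ⟨hf0.le.trans zero_le_one, hfM⟩
  have hl0 : 0 < l := hl.1.lt_of_ne <| by
    rintro rfl
    exact zero_ne_one (hf0 ▸ hfl)
  exact ⟨⟨_, hfl⟩, l, hl0, fun _ => rfl⟩

theorem exists_isNorm_powVec {m : ℕ} {χ : Fin m → ℕ} (hχ : ∀ i, 0 < χ i) (d : Fin m → ℕ)
    (z : Sph m) : ∃ w : Sph m, IsNorm m χ (powVec m d z) w := by
  obtain ⟨j, hj⟩ := z.exists_ne_zero
  exact exists_isNorm hχ (Function.ne_iff.mpr ⟨j, pow_ne_zero (d j) hj⟩)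

theorem IsNorm.powVec_powVec {m : ℕ} {χ ω d₁ d₂ : Fin m → ℕ} {s r : ℕ}
    (hωd : ∀ i, ω i * d₂ i = s * χ i) (hd : ∀ i, d₁ i * d₂ i = r) {z w₁ w₂ : Sph m}
    (h₁ : IsNorm m ω (powVec m d₁ z) w₁) (h₂ : IsNorm m χ (powVec m d₂ w₁) w₂) :
    IsNorm m χ (fun i => (z : Fin m → ℂ) i ^ r) w₂ := by
  -- `ω i * d₂ i = s * χ i` lets the first scalar `l₁` pass through the second map as `l₁ ^ s`.
  obtain ⟨l₁, hl₁, hw₁⟩ := h₁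
  obtain ⟨l₂, hl₂, hw₂⟩ := h₂
  refine ⟨l₂ * l₁ ^ s, by positivity, fun i => ?_⟩
  rw [hw₂, powVec, hw₁, powVec, mul_pow, ← pow_mul, ← pow_mul, hωd, hd]
  push_cast
  ring

theorem statement5_general (n : ℕ) (ω χ : Fin (n + 1) → ℕ)
    (hω : ∀ i, 1 ≤ ω i) (hχ : ∀ i, 1 ≤ χ i)
    (e1 : WP (n + 1) χ → WP (n + 1) ω) (h1 : IsEMap (n + 1) ω χ e1)
    (e2 : WP (n + 1) ω → WP (n + 1) χ) (h2 : IsEMap (n + 1) χ ω e2)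
    (p : WP (n + 1) χ → WP (n + 1) χ)
    (hp : IsPowMap (n + 1) χ (sVal (n + 1) ω χ * sVal (n + 1) χ ω) p) :
    e2 ∘ e1 = p := by
  funext x
  induction x using Quot.ind with | _ z =>
  obtain ⟨w₁, hw₁⟩ := exists_isNorm_powVec hω (dExp (n + 1) ω χ) z
  obtain ⟨w₂, hw₂⟩ := exists_isNorm_powVec hχ (dExp (n + 1) χ ω) w₁
  have hz : IsNorm (n + 1) χ
      (fun i => (z : Fin (n + 1) → ℂ) i ^ (sVal (n + 1) ω χ * sVal (n + 1) χ ω)) w₂ :=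
    hw₁.powVec_powVec (mul_dExp χ hω) (dExp_mul_dExp hχ hω) hw₂
  show e2 (e1 (wpMk (n + 1) χ z)) = p (wpMk (n + 1) χ z)
  rw [h1.2 z w₁ hw₁, h2.2 w₁ w₂ hw₂, hp.2 z w₂ hz]

/-- For weight vectors `ω, χ`, the composition
`e(χ/ω) ∘ e(ω/χ) : P(χ) → P(χ)` is the `s''`-th power map, where
`s'' = s(ω,χ)·s(χ,ω)`. -/
theorem statement5 (n : ℕ) (hn : 1 ≤ n) (ω χ : Fin (n + 1) → ℕ)
    (hω : ∀ i, 1 ≤ ω i) (hχ : ∀ i, 1 ≤ χ i)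
    (e1 : WP (n + 1) χ → WP (n + 1) ω) (h1 : IsEMap (n + 1) ω χ e1)
    (e2 : WP (n + 1) ω → WP (n + 1) χ) (h2 : IsEMap (n + 1) χ ω e2)
    (p : WP (n + 1) χ → WP (n + 1) χ)
    (hp : IsPowMap (n + 1) χ (sVal (n + 1) ω χ * sVal (n + 1) χ ω) p) :
    e2 ∘ e1 = p :=
  statement5_general n ω χ hω hχ e1 h1 e2 h2 p hp
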